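/- Positivity of the CFL constant near the saturation level: let ψ be a saturation with saturation level α. Suppose there exist k ≥ 1 and a neighbourhood of α on which ψ is k times continuously differentiable, with ψ^{(j)}(α) = 0 for 1 ≤ j < k and (−1)^k·ψ^{(k)}(α) > 0. Then γ := inf_{s ∈ [0,α)} (α − s)/(α·ψ(s)) > 0. -/

import Mathlib

/-- A *saturation* with saturation level `α > 0`: a continuous non-increasing function
`ψ : [0,∞) → ℝ` with `ψ α = 0` and `(α − s)·ψ s > 0` for every `s ≥ 0`, `s ≠ α`. -/
def IsSaturation (ψ : ℝ → ℝ) (α : ℝ) : Prop :=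
  0 < α ∧ ContinuousOn ψ (Set.Ici 0) ∧
    (∀ s₁ s₂, 0 ≤ s₁ → s₁ ≤ s₂ → ψ s₂ ≤ ψ s₁) ∧
    ψ α = 0 ∧ ∀ s, 0 ≤ s → s ≠ α → 0 < (α - s) * ψ s

/-- The CFL constant `γ = inf_{s ∈ [0,α)} (α − s)/(α·ψ s)`. -/
noncomputable def gammaCFL (ψ : ℝ → ℝ) (α : ℝ) : ℝ :=
  sInf ((fun s => (α - s) / (α * ψ s)) '' Set.Ico 0 α)

/-! The ratio `(α − s)/(α ψ s)` is continuous and positive on `[0, α)`, so it is bounded away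
from zero on every compact `[0, a] ⊂ [0, α)`. Near `α` the only danger is `ψ s` being large
compared with `α − s`, which differentiability of `ψ` at `α` (where `ψ α = 0`) rules out:
`ψ s ≤ C (α − s)` there, so the ratio stays above `1/(α C)`. -/

open Filter Topology Set

theorem exists_pos_forall_le_of_continuousOn_Ico {g : ℝ → ℝ} {a b c : ℝ}
    (hg : ContinuousOn g (Ico a b)) (hpos : ∀ x ∈ Ico a b, 0 < g x) (hc : 0 < c)
    (hnear : ∀ᶠ x in 𝓝[<] b, c ≤ g x) : ∃ m > 0, ∀ x ∈ Ico a b, m ≤ g x := by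
  rcases le_or_gt b a with hba | hab
  · exact ⟨c, hc, fun x hx => absurd (hx.1.trans_lt hx.2) hba.not_gt⟩
  obtain ⟨d, hdb, hd⟩ := mem_nhdsLT_iff_exists_Ioo_subset.mp hnear
  have hsub : Icc a (max a d) ⊆ Ico a b := fun x hx => ⟨hx.1, hx.2.trans_lt (max_lt hab hdb)⟩
  obtain ⟨x₀, hx₀, hmin⟩ := isCompact_Icc.exists_isMinOn (nonempty_Icc.2 (le_max_left a d))
    (hg.mono hsub)
  refine ⟨min (g x₀) c, lt_min (hpos x₀ (hsub hx₀)) hc, fun x hx => ?_⟩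
  rcases le_or_gt x (max a d) with hxe | hxe
  · exact (min_le_left _ _).trans (hmin ⟨hx.1, hxe⟩)
  · exact (min_le_right _ _).trans (hd ⟨(le_max_right a d).trans_lt hxe, hx.2⟩)

theorem DifferentiableAt.exists_pos_eventually_le_mul_sub {f : ℝ → ℝ} {a : ℝ}
    (hf : DifferentiableAt ℝ f a) (hfa : f a = 0) :
    ∃ C > 0, ∀ᶠ x in 𝓝[<] a, f x ≤ C * (a - x) := by
  obtain ⟨C, hC, hO⟩ := hf.isBigO_sub.exists_pos
  refine ⟨C, hC, ?_⟩
  filter_upwards [nhdsWithin_le_nhds hO.bound, self_mem_nhdsWithin] with x hx hxa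
  rw [hfa, sub_zero, Real.norm_eq_abs, Real.norm_eq_abs, abs_sub_comm,
    _root_.abs_of_pos (sub_pos.2 (mem_Iio.1 hxa))] at hx
  exact (le_abs_self _).trans hx

theorem IsSaturation.pos_of_mem_Ico {ψ : ℝ → ℝ} {α : ℝ} (hψ : IsSaturation ψ α) {s : ℝ}
    (hs : s ∈ Ico 0 α) : 0 < ψ s :=
  pos_of_mul_pos_right (hψ.2.2.2.2 s hs.1 hs.2.ne) (sub_pos.2 hs.2).le

theorem gammaCFL_pos (ψ : ℝ → ℝ) (α : ℝ) (hψ : IsSaturation ψ α)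
    (k : ℕ) (hk : 1 ≤ k)
    (hsmooth : ∃ ε > (0 : ℝ), ContDiffOn ℝ k ψ (Set.Ioo (α - ε) (α + ε))) :
    0 < gammaCFL ψ α := by
  have hψpos : ∀ s ∈ Ico 0 α, 0 < ψ s := fun _ => hψ.pos_of_mem_Ico
  obtain ⟨hα, hcont, -, hψα, -⟩ := hψ
  have hdiff : DifferentiableAt ℝ ψ α := by
    obtain ⟨ε, hε, hcd⟩ := hsmooth
    exact (hcd.contDiffAt (Ioo_mem_nhds (by linarith) (by linarith))).differentiableAt
      (by norm_cast; omega)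
  obtain ⟨C, hC, hle⟩ := hdiff.exists_pos_eventually_le_mul_sub hψα
  have hnear : ∀ᶠ s in 𝓝[<] α, 1 / (α * C) ≤ (α - s) / (α * ψ s) := by
    filter_upwards [hle, Ioo_mem_nhdsLT hα] with s hs hs0
    have hψs := hψpos s ⟨hs0.1.le, hs0.2⟩
    rw [div_le_div_iff₀ (by positivity) (by positivity)]
    nlinarith
  obtain ⟨m, hm, hlb⟩ := exists_pos_forall_le_of_continuousOn_Ico
    ((continuousOn_const.sub continuousOn_id).div
      (continuousOn_const.mul (hcont.mono fun s hs => hs.1))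
      fun s hs => (mul_pos hα (hψpos s hs)).ne')
    (fun s hs => div_pos (sub_pos.2 hs.2) (mul_pos hα (hψpos s hs)))
    (by positivity) hnear
  exact hm.trans_le (le_csInf ((nonempty_Ico.2 hα).image _) (forall_mem_image.2 hlb))
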